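/- Let A be a Banach algebra and X a norm-closed introverted sub-bimodule of A* contained in WAP(A). Then the two Arens products on A** induce the same well-defined product on X* = A**/X^⊥, and with this product X* is a dual Banach algebra (multiplication is separately weak*-continuous). -/

import Mathlib

/-!
The heart of the matter is Grothendieck's description of weakly compact operators: if
`T : E → F` is weakly compact, then `T**` maps `E**` into `F`. By Goldstine's theorem an element
`Φ` of the unit ball of `E**` is a weak*-limit of the unit ball `B` of `E`, so `T** Φ` lies in the
weak*-closure of `T(B)`; since `T(B)` is relatively weakly compact, that closure is already
contained in `F`. For `μ ∈ WAP(A)` and `T = (a ↦ μ·a)` this says that `Ψ ↦ ⟨Φ, Ψ·μ⟩` is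
evaluation at some `ν ∈ A*`, and testing against `A ⊆ A**` shows `ν = μ·Φ`: the two Arens products
agree on `μ`. Introversion keeps `Ψ·μ` and `μ·Φ` in `X`, which gives the rest.
-/

open Metric

variable {𝔄 : Type*} [NonUnitalNormedRing 𝔄] [NormedSpace ℂ 𝔄]
  [IsScalarTower ℂ 𝔄 𝔄] [SMulCommClass ℂ 𝔄 𝔄]

/-- The map `a ↦ μ·a` where `⟨μ·a, b⟩ = μ(ab)`. -/
noncomputable def dotLmap (μ : 𝔄 →L[ℂ] ℂ) : 𝔄 →L[ℂ] (𝔄 →L[ℂ] ℂ) :=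
  (ContinuousLinearMap.compL ℂ 𝔄 𝔄 ℂ μ).comp (ContinuousLinearMap.mul ℂ 𝔄)

/-- The map `a ↦ a·μ` where `⟨a·μ, b⟩ = μ(ba)`. -/
noncomputable def dotRmap (μ : 𝔄 →L[ℂ] ℂ) : 𝔄 →L[ℂ] (𝔄 →L[ℂ] ℂ) :=
  (ContinuousLinearMap.compL ℂ 𝔄 𝔄 ℂ μ).comp ((ContinuousLinearMap.mul ℂ 𝔄).flip)

/-- Weak compactness of a map: the image of the closed unit ball is relatively compact
in the weak topology of the codomain. -/
def IsWeaklyCompactMap {E F : Type*} [NormedAddCommGroup E] [NormedSpace ℂ E]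
    [NormedAddCommGroup F] [NormedSpace ℂ F] (T : E → F) : Prop :=
  IsCompact (closure ((toWeakSpace ℂ F) '' (T '' closedBall (0 : E) 1)))

section Goldstine

variable {𝕜 E : Type*} [RCLike 𝕜] [SeminormedAddCommGroup E] [NormedSpace 𝕜 E]

theorem StrongDual.norm_le_of_forall_re_le {η : StrongDual 𝕜 E} {u : ℝ}
    (h : ∀ a ∈ closedBall (0 : E) 1, RCLike.re (η a) ≤ u) : ‖η‖ ≤ u := by
  have hu : 0 ≤ u := by simpa using h 0 (mem_closedBall_self zero_le_one)
  refine ContinuousLinearMap.opNorm_le_of_unit_norm hu fun a ha => ?_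
  obtain ⟨c, hc, hca⟩ := RCLike.exists_norm_eq_mul_self (η a)
  calc ‖η a‖ = RCLike.re (η (c • a)) := by rw [map_smul, smul_eq_mul, ← hca, RCLike.ofReal_re]
    _ ≤ u := h _ (by simp [norm_smul, hc, ha])

theorem convex_image_closedBall {F : Type*} [AddCommGroup F] [Module 𝕜 F] [Module ℝ F]
    [IsScalarTower ℝ 𝕜 F] (P : E →ₗ[𝕜] F) : Convex ℝ (P '' closedBall (0 : E) 1) := by
  rintro _ ⟨a, ha, rfl⟩ _ ⟨b, hb, rfl⟩ s t hs ht hst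
  refine ⟨(s : 𝕜) • a + (t : 𝕜) • b, ?_, by
    rw [map_add, map_smul, map_smul, RCLike.real_smul_eq_coe_smul (K := 𝕜) s,
      RCLike.real_smul_eq_coe_smul (K := 𝕜) t]⟩
  rw [mem_closedBall_zero_iff] at ha hb ⊢
  calc ‖(s : 𝕜) • a + (t : 𝕜) • b‖ ≤ s * ‖a‖ + t * ‖b‖ := by
        refine (norm_add_le _ _).trans_eq ?_
        rw [norm_smul, norm_smul, RCLike.norm_of_nonneg hs, RCLike.norm_of_nonneg ht]
    _ ≤ s * 1 + t * 1 := by gcongr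
    _ = 1 := by rw [mul_one, mul_one, hst]

variable {ι : Type*} [Fintype ι]

theorem StrongDual.apply_comp_pi (Φ : StrongDual 𝕜 (StrongDual 𝕜 E)) (g : StrongDual 𝕜 (ι → 𝕜))
    (f : ι → StrongDual 𝕜 E) :
    Φ (g.comp (ContinuousLinearMap.pi f)) = g fun i => Φ (f i) := by
  classical
  have hg (x : ι → 𝕜) : g x = ∑ i, x i * g (fun j => if i = j then 1 else 0) :=
    (g : (ι → 𝕜) →ₗ[𝕜] 𝕜).pi_apply_eq_sum_univ x
  have hgf : g.comp (ContinuousLinearMap.pi f) =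
      ∑ i, g (fun j => if i = j then 1 else 0) • f i := by
    ext a
    rw [ContinuousLinearMap.comp_apply, hg]
    simp [mul_comm]
  rw [hgf, hg fun i => Φ (f i), map_sum]
  simp [mul_comm]

theorem StrongDual.pi_apply_mem_closure_image_closedBall (Φ : StrongDual 𝕜 (StrongDual 𝕜 E))
    (hΦ : ‖Φ‖ ≤ 1) (f : ι → StrongDual 𝕜 E) :
    (fun i => Φ (f i)) ∈ closure ((fun a i => f i a) '' closedBall (0 : E) 1) := by
  set P := ContinuousLinearMap.pi f
  by_contra h
  obtain ⟨g, u, hgu, hug⟩ := RCLike.geometric_hahn_banach_closed_point (𝕜 := 𝕜)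
    (convex_image_closedBall (P : E →ₗ[𝕜] ι → 𝕜)).closure isClosed_closure h
  have hgP : ‖g.comp P‖ ≤ u := norm_le_of_forall_re_le fun a ha =>
    (hgu _ (subset_closure (Set.mem_image_of_mem P ha))).le
  have : RCLike.re (g fun i => Φ (f i)) ≤ u :=
    calc RCLike.re (g fun i => Φ (f i)) = RCLike.re (Φ (g.comp P)) := by rw [apply_comp_pi]
      _ ≤ ‖Φ (g.comp P)‖ := RCLike.re_le_norm _
      _ ≤ ‖Φ‖ * ‖g.comp P‖ := Φ.le_opNorm _
      _ ≤ 1 * u := by gcongr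
      _ = u := one_mul u
  exact hug.not_ge this

/-- Goldstine's theorem, with `E**` carrying the topology of pointwise convergence on `E*`. -/
theorem StrongDual.coeFn_mem_closure_image_closedBall (Φ : StrongDual 𝕜 (StrongDual 𝕜 E))
    (hΦ : ‖Φ‖ ≤ 1) :
    ⇑Φ ∈ closure ((fun a (η : StrongDual 𝕜 E) => η a) '' closedBall (0 : E) 1) := by
  rw [mem_closure_iff_nhds]
  intro t ht
  rw [nhds_pi, Filter.mem_pi'] at ht
  obtain ⟨I, U, hU, hUt⟩ := ht
  obtain ⟨_, hyU, a, ha, rfl⟩ := mem_closure_iff_nhds.1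
    (pi_apply_mem_closure_image_closedBall Φ hΦ ((↑) : I → StrongDual 𝕜 E))
    (Set.univ.pi fun i => U i) (set_pi_mem_nhds Set.finite_univ fun i _ => hU i)
  exact ⟨_, hUt fun i hi => hyU ⟨i, hi⟩ trivial, a, ha, rfl⟩

end Goldstine

section WeaklyCompact

variable {E F : Type*} [NormedAddCommGroup E] [NormedSpace ℂ E] [NormedAddCommGroup F]
  [NormedSpace ℂ F] {T : E →L[ℂ] F}

theorem IsWeaklyCompactMap.exists_apply_comp_eq_of_norm_le_one (hT : IsWeaklyCompactMap T)
    (Φ : StrongDual ℂ (StrongDual ℂ E)) (hΦ : ‖Φ‖ ≤ 1) :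
    ∃ y : F, ∀ Ψ : StrongDual ℂ F, Φ (Ψ.comp T) = Ψ y := by
  set B := closedBall (0 : E) 1
  let ev : WeakSpace ℂ F → StrongDual ℂ F → ℂ := fun y Ψ => Ψ ((toWeakSpace ℂ F).symm y)
  have hev : Continuous ev := continuous_pi fun Ψ => WeakBilin.eval_continuous _ Ψ
  let bidualMap : (StrongDual ℂ E → ℂ) → StrongDual ℂ F → ℂ := fun g Ψ => g (Ψ.comp T)
  have hbidualMap : Continuous bidualMap := continuous_pi fun Ψ => continuous_apply _
  have hK : IsClosed (ev '' closure (toWeakSpace ℂ F '' (T '' B))) := (hT.image hev).isClosed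
  have hsub : bidualMap '' ((fun a η => η a) '' B) ⊆
      ev '' closure (toWeakSpace ℂ F '' (T '' B)) := by
    rintro _ ⟨_, ⟨a, ha, rfl⟩, rfl⟩
    exact ⟨_, subset_closure ⟨T a, ⟨a, ha, rfl⟩, rfl⟩, rfl⟩
  obtain ⟨y, -, hy⟩ := closure_minimal hsub hK <| image_closure_subset_closure_image hbidualMap
    ⟨_, StrongDual.coeFn_mem_closure_image_closedBall Φ hΦ, rfl⟩
  exact ⟨(toWeakSpace ℂ F).symm y, fun Ψ => (congr_fun hy Ψ).symm⟩

theorem IsWeaklyCompactMap.exists_apply_comp_eq (hT : IsWeaklyCompactMap T)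
    (Φ : StrongDual ℂ (StrongDual ℂ E)) : ∃ y : F, ∀ Ψ : StrongDual ℂ F, Φ (Ψ.comp T) = Ψ y := by
  rcases eq_or_ne Φ 0 with rfl | hΦ
  · exact ⟨0, fun Ψ => by simp⟩
  have hΦ₀ : ‖Φ‖ ≠ 0 := mt Φ.opNorm_zero_iff.1 hΦ
  have hΦ' : (‖Φ‖ : ℂ) ≠ 0 := mod_cast hΦ₀
  have hnorm : ‖(‖Φ‖ : ℂ)⁻¹ • Φ‖ ≤ 1 := by
    refine (Φ.opNorm_smul_le _).trans_eq ?_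
    rw [norm_inv, Complex.norm_real, Real.norm_eq_abs, abs_of_nonneg Φ.opNorm_nonneg]
    exact inv_mul_cancel₀ hΦ₀
  obtain ⟨y, hy⟩ := hT.exists_apply_comp_eq_of_norm_le_one _ hnorm
  refine ⟨(‖Φ‖ : ℂ) • y, fun Ψ => ?_⟩
  rw [map_smul, ← hy]
  simp [hΦ']

end WeaklyCompact

theorem inclusionInDoubleDual_comp_dotLmap (μ : 𝔄 →L[ℂ] ℂ) (b : 𝔄) :
    (NormedSpace.inclusionInDoubleDual ℂ 𝔄 b).comp (dotLmap μ) = dotRmap μ b := by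
  ext a
  simp [dotLmap, dotRmap]

theorem apply_comp_dotLmap_eq_of_isWeaklyCompactMap {μ : 𝔄 →L[ℂ] ℂ}
    (hμ : IsWeaklyCompactMap (dotLmap μ)) (Φ Ψ : (𝔄 →L[ℂ] ℂ) →L[ℂ] ℂ) :
    Φ (Ψ.comp (dotLmap μ)) = Ψ (Φ.comp (dotRmap μ)) := by
  obtain ⟨ν, hν⟩ := hμ.exists_apply_comp_eq Φ
  have hν_eq : ν = Φ.comp (dotRmap μ) := by
    ext b
    simpa [inclusionInDoubleDual_comp_dotLmap] using
      (hν (NormedSpace.inclusionInDoubleDual ℂ 𝔄 b)).symm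
  rw [hν, hν_eq]

theorem introverted_wap_submodule_arens_products_agree_general
    (X : Submodule ℂ (𝔄 →L[ℂ] ℂ))
    (hXintro : ∀ μ ∈ X, ∀ Φ : (𝔄 →L[ℂ] ℂ) →L[ℂ] ℂ,
      Φ.comp (dotLmap μ) ∈ X ∧ Φ.comp (dotRmap μ) ∈ X)
    (hXwap : ∀ μ ∈ X, IsWeaklyCompactMap (fun a : 𝔄 => dotLmap μ a)) :
    -- the two Arens products agree on X, so they induce the same product on X*
    (∀ Φ Ψ : (𝔄 →L[ℂ] ℂ) →L[ℂ] ℂ, ∀ μ ∈ X,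
      Φ (Ψ.comp (dotLmap μ)) = Ψ (Φ.comp (dotRmap μ))) ∧
    -- the induced product on X* = 𝔄**/X^⊥ is well defined
    (∀ Φ Φ' Ψ Ψ' : (𝔄 →L[ℂ] ℂ) →L[ℂ] ℂ,
      (∀ μ ∈ X, Φ μ = Φ' μ) → (∀ μ ∈ X, Ψ μ = Ψ' μ) →
      ∀ μ ∈ X, Φ (Ψ.comp (dotLmap μ)) = Φ' (Ψ'.comp (dotLmap μ))) ∧
    -- X* is a dual Banach algebra: multiplication is separately weak*-continuous
    (∀ Φ : (𝔄 →L[ℂ] ℂ) →L[ℂ] ℂ, ∀ μ ∈ X,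
      (∃ ν ∈ X, ∀ Ψ : (𝔄 →L[ℂ] ℂ) →L[ℂ] ℂ, Φ (Ψ.comp (dotLmap μ)) = Ψ ν) ∧
      (∃ ν ∈ X, ∀ Ψ : (𝔄 →L[ℂ] ℂ) →L[ℂ] ℂ, Ψ (Φ.comp (dotLmap μ)) = Ψ ν)) := by
  have arens (μ) (hμ : μ ∈ X) (Φ Ψ : (𝔄 →L[ℂ] ℂ) →L[ℂ] ℂ) :
      Φ (Ψ.comp (dotLmap μ)) = Ψ (Φ.comp (dotRmap μ)) :=
    apply_comp_dotLmap_eq_of_isWeaklyCompactMap (hXwap μ hμ) Φ Ψ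
  refine ⟨fun Φ Ψ μ hμ => arens μ hμ Φ Ψ, ?_, fun Φ μ hμ => ?_⟩
  · intro Φ Φ' Ψ Ψ' hΦ hΨ μ hμ
    calc Φ (Ψ.comp (dotLmap μ)) = Φ' (Ψ.comp (dotLmap μ)) := hΦ _ (hXintro μ hμ Ψ).1
      _ = Ψ (Φ'.comp (dotRmap μ)) := arens μ hμ Φ' Ψ
      _ = Ψ' (Φ'.comp (dotRmap μ)) := hΨ _ (hXintro μ hμ Φ').2
      _ = Φ' (Ψ'.comp (dotLmap μ)) := (arens μ hμ Φ' Ψ').symm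
  · exact ⟨⟨Φ.comp (dotRmap μ), (hXintro μ hμ Φ).2, arens μ hμ Φ⟩,
      ⟨Φ.comp (dotLmap μ), (hXintro μ hμ Φ).1, fun Ψ => rfl⟩⟩

/-- Let `𝔄` be a Banach algebra and `X` a norm-closed introverted
sub-bimodule of `𝔄*` contained in `WAP(𝔄)`.  Then the two Arens products
`⟨Φ□Ψ, μ⟩ = ⟨Φ, Ψ·μ⟩` and `⟨Φ◇Ψ, μ⟩ = ⟨Ψ, μ·Φ⟩` on `𝔄**` agree on `X` and descend to a
well-defined product on `X* = 𝔄**/X^⊥`, for which `X*` is a dual Banach algebra: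
multiplication is separately weak*-continuous (each one-sided multiplication is
represented by evaluation at an element of `X`). -/
theorem introverted_wap_submodule_arens_products_agree
    [CompleteSpace 𝔄]
    (X : Submodule ℂ (𝔄 →L[ℂ] ℂ)) (hXcl : IsClosed (X : Set (𝔄 →L[ℂ] ℂ)))
    (hXmod : ∀ μ ∈ X, ∀ a : 𝔄, dotLmap μ a ∈ X ∧ dotRmap μ a ∈ X)
    (hXintro : ∀ μ ∈ X, ∀ Φ : (𝔄 →L[ℂ] ℂ) →L[ℂ] ℂ,
      Φ.comp (dotLmap μ) ∈ X ∧ Φ.comp (dotRmap μ) ∈ X)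
    (hXwap : ∀ μ ∈ X, IsWeaklyCompactMap (fun a : 𝔄 => dotLmap μ a)) :
    -- the two Arens products agree on X, so they induce the same product on X*
    (∀ Φ Ψ : (𝔄 →L[ℂ] ℂ) →L[ℂ] ℂ, ∀ μ ∈ X,
      Φ (Ψ.comp (dotLmap μ)) = Ψ (Φ.comp (dotRmap μ))) ∧
    -- the induced product on X* = 𝔄**/X^⊥ is well defined
    (∀ Φ Φ' Ψ Ψ' : (𝔄 →L[ℂ] ℂ) →L[ℂ] ℂ,
      (∀ μ ∈ X, Φ μ = Φ' μ) → (∀ μ ∈ X, Ψ μ = Ψ' μ) →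
      ∀ μ ∈ X, Φ (Ψ.comp (dotLmap μ)) = Φ' (Ψ'.comp (dotLmap μ))) ∧
    -- X* is a dual Banach algebra: multiplication is separately weak*-continuous
    (∀ Φ : (𝔄 →L[ℂ] ℂ) →L[ℂ] ℂ, ∀ μ ∈ X,
      (∃ ν ∈ X, ∀ Ψ : (𝔄 →L[ℂ] ℂ) →L[ℂ] ℂ, Φ (Ψ.comp (dotLmap μ)) = Ψ ν) ∧
      (∃ ν ∈ X, ∀ Ψ : (𝔄 →L[ℂ] ℂ) →L[ℂ] ℂ, Ψ (Φ.comp (dotLmap μ)) = Ψ ν)) :=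
  introverted_wap_submodule_arens_products_agree_general X hXintro hXwap
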